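/- Let G be a finite group and M ◁ G with |G:M| = p a prime. Then G⁻ ⊆ M if and only if every element of G \ M has p-power order. -/

import Mathlib

/-- A subgroup is maximal cyclic if it is cyclic and not properly contained
in any cyclic subgroup. -/
def IsMaximalCyclic {G : Type*} [Group G] (C : Subgroup G) : Prop :=
  IsCyclic C ∧ ∀ D : Subgroup G, IsCyclic D → C ≤ D → C = D

/-- η(G): the number of conjugacy classes of maximal cyclic subgroups of `G`. -/
noncomputable def eta (G : Type*) [Group G] : ℕ :=
  Nat.card (Quot (fun C D : {C : Subgroup G // IsMaximalCyclic C} =>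
    ∃ g : G, D.1 = C.1.map (MulAut.conj g).toMonoidHom))

/-- The set of elements generating a non-maximal cyclic subgroup. -/
def Gminus (G : Type*) [Group G] : Set G :=
  {g : G | ¬ IsMaximalCyclic (Subgroup.zpowers g)}

/-- `C` is a maximal cyclic subgroup of `N` (all inside an ambient group). -/
def IsMaximalCyclicIn {G : Type*} [Group G] (N C : Subgroup G) : Prop :=
  C ≤ N ∧ IsCyclic C ∧ ∀ D : Subgroup G, D ≤ N → IsCyclic D → C ≤ D → C = D

/-!
If `G⁻ ⊆ M` and `g ∉ M` has order `p^a m` with `p ∤ m`, then `g^m ∉ M`, so `⟨g^m⟩` is maximal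
cyclic; as `⟨g^m⟩ ≤ ⟨g⟩` the two coincide and `m = 1`. Conversely, if `g ∉ M` and `g = d^k`,
then `d ∉ M` and `p ∤ k`, since `G/M` has order `p`; as `d` has `p`-power order, `⟨d^k⟩ = ⟨d⟩`,
so `⟨g⟩` is maximal cyclic.
-/

open Subgroup

theorem isMaximalCyclic_zpowers_iff {G : Type*} [Group G] (g : G) :
    IsMaximalCyclic (zpowers g) ↔ ∀ d : G, g ∈ zpowers d → zpowers g = zpowers d := by
  refine ⟨fun h d hd ↦ h.2 _ inferInstance (zpowers_le.mpr hd), fun h ↦ ⟨inferInstance, ?_⟩⟩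
  intro D hD hle
  obtain ⟨d, rfl⟩ := (D.isCyclic_iff_exists_zpowers_eq_top).mp hD
  exact h d (hle (mem_zpowers g))

theorem Subgroup.pow_mem_iff_dvd_of_index_eq_prime {G : Type*} [Group G] {M : Subgroup G}
    [M.Normal] {p : ℕ} (hp : p.Prime) (hidx : M.index = p) {g : G} (hg : g ∉ M) (k : ℕ) :
    g ^ k ∈ M ↔ p ∣ k := by
  have := Fact.mk hp
  have horder : orderOf (g : G ⧸ M) = p := by
    refine orderOf_eq_prime ?_ (mt (QuotientGroup.eq_one_iff g).mp hg)
    rw [← QuotientGroup.mk_pow, QuotientGroup.eq_one_iff, ← hidx]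
    exact M.pow_index_mem g
  rw [← QuotientGroup.eq_one_iff, QuotientGroup.mk_pow, ← orderOf_dvd_iff_pow_eq_one, horder]

theorem orderOf_pow_ordCompl {G : Type*} [Monoid G] {g : G} (hg : orderOf g ≠ 0) (p : ℕ) :
    orderOf (g ^ ordCompl[p] (orderOf g)) = ordProj[p] (orderOf g) :=
  orderOf_pow_orderOf_div hg (Nat.ordProj_dvd _ p)

theorem stmt_14 {G : Type*} [Group G] [Finite G] (M : Subgroup G) [M.Normal]
    {p : ℕ} (hp : p.Prime) (hidx : M.index = p) :
    Gminus G ⊆ (M : Set G) ↔ ∀ g : G, g ∉ M → ∃ n : ℕ, orderOf g = p ^ n := by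
  have hpow := fun g (hg : g ∉ M) ↦ M.pow_mem_iff_dvd_of_index_eq_prime hp hidx hg
  constructor
  · intro hminus g hg
    have hn : orderOf g ≠ 0 := (orderOf_pos g).ne'
    have hgm : g ^ ordCompl[p] (orderOf g) ∉ M :=
      fun h ↦ Nat.not_dvd_ordCompl hp hn ((hpow g hg _).mp h)
    have hmax : IsMaximalCyclic (zpowers (g ^ ordCompl[p] (orderOf g))) :=
      not_not.mp fun h ↦ hgm (hminus h)
    have heq := (isMaximalCyclic_zpowers_iff _).mp hmax g (pow_mem (mem_zpowers g) _)
    have hcard := Nat.card_zpowers (g ^ ordCompl[p] (orderOf g))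
    rw [heq, Nat.card_zpowers, orderOf_pow_ordCompl hn] at hcard
    exact ⟨_, hcard⟩
  · intro hpower g hminus
    by_contra hg
    refine hminus ((isMaximalCyclic_zpowers_iff g).mpr fun d hd ↦ ?_)
    obtain ⟨k, rfl⟩ := (Submonoid.mem_powers_iff _ _).mp (mem_powers_iff_mem_zpowers.mpr hd)
    have hdM : d ∉ M := fun h ↦ hg (pow_mem h k)
    have hk : ¬ p ∣ k := fun h ↦ hg ((hpow d hdM k).mpr h)
    obtain ⟨b, hb⟩ := hpower d hdM
    have hord : orderOf (d ^ k) = orderOf d :=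
      Nat.Coprime.orderOf_pow (hb ▸ (hp.coprime_iff_not_dvd.mpr hk).pow_left b)
    exact eq_of_le_of_card_ge (zpowers_le.mpr hd) (by rw [Nat.card_zpowers, Nat.card_zpowers, hord])
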